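/- Let κ be a positive integer, set k = (κ−1)!, let q be a positive integer and let Y ⊆ ZMod q satisfy 0 ∉ (k)Y. Then the digraph D with vertex set ZMod q and arc relation z₁ → z₂ iff z₁ − z₂ ∈ Y has no directed cycle of length s for any s with 1 ≤ s ≤ κ − 1. -/

import Mathlib

/-! A directed cycle of length `s` in the difference digraph yields `s` elements of `Y`, the arc
differences `z t - z (t + 1)`, which telescope around the cycle to `0`; so `0 ∈ (s)Y`. Since
`s ≤ κ - 1` divides `(κ - 1)!`, going around the cycle `(κ - 1)! / s` times gives `0 ∈ ((κ - 1)!)Y`. -/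

open Finset

/-- A digraph with arc relation `E` has a directed cycle of length `s ≥ 1`:
an injective `z : Fin s → V` with an arc from each `z t` to `z (t+1 mod s)`. -/
def HasCycleOfLength {V : Type*} (E : V → V → Prop) (s : ℕ) : Prop :=
  ∃ z : Fin s → V, Function.Injective z ∧
    ∀ t : Fin s, E (z t) (z ⟨(t.1 + 1) % s, Nat.mod_lt _ t.pos⟩)

open Pointwise

/-- The k-fold sumset `(k)Y = {y₁ + y₂ + ⋯ + y_k : each yᵢ ∈ Y}`. -/
def kSum {q : ℕ} (k : ℕ) (Y : Set (ZMod q)) : Set (ZMod q) :=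
  {z | ∃ y : Fin k → ZMod q, (∀ i, y i ∈ Y) ∧ ∑ i, y i = z}

section kSum

variable {q : ℕ} {Y : Set (ZMod q)}

theorem zero_mem_kSum_zero : (0 : ZMod q) ∈ kSum 0 Y :=
  ⟨Fin.elim0, fun i => i.elim0, Fin.sum_univ_zero _⟩

theorem add_mem_kSum {a b : ℕ} {z w : ZMod q} (hz : z ∈ kSum a Y) (hw : w ∈ kSum b Y) :
    z + w ∈ kSum (a + b) Y := by
  obtain ⟨y, hyY, rfl⟩ := hz
  obtain ⟨y', hy'Y, rfl⟩ := hw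
  refine ⟨Fin.append y y', Fin.addCases (by simpa using hyY) (by simpa using hy'Y), ?_⟩
  simp only [Fin.sum_univ_add, Fin.append_left, Fin.append_right]

theorem nsmul_mem_kSum {a : ℕ} {z : ZMod q} (hz : z ∈ kSum a Y) (m : ℕ) :
    m • z ∈ kSum (m * a) Y := by
  induction m with
  | zero => simpa using zero_mem_kSum_zero
  | succ m ih =>
    rw [succ_nsmul, Nat.succ_mul]
    exact add_mem_kSum ih hz

theorem zero_mem_kSum_of_dvd {a k : ℕ} (h : (0 : ZMod q) ∈ kSum a Y) (hak : a ∣ k) :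
    (0 : ZMod q) ∈ kSum k Y := by
  obtain ⟨m, rfl⟩ := hak
  simpa [mul_comm] using nsmul_mem_kSum h m

end kSum

theorem Fin.sum_sub_add_one {G : Type*} [AddCommGroup G] {s : ℕ} [NeZero s] (z : Fin s → G) :
    ∑ t, (z t - z (t + 1)) = 0 := by
  rw [sum_sub_distrib, sub_eq_zero]
  exact (Fintype.sum_equiv (Equiv.addRight 1) _ _ fun _ => rfl).symm

theorem Fin.mk_add_one_mod {s : ℕ} [NeZero s] (t : Fin s) :
    (⟨(t.1 + 1) % s, Nat.mod_lt _ t.pos⟩ : Fin s) = t + 1 := by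
  ext
  simp [Fin.val_add, Nat.add_mod]

theorem zero_mem_kSum_of_hasCycleOfLength {q s : ℕ} {Y : Set (ZMod q)}
    (h : HasCycleOfLength (fun z₁ z₂ : ZMod q => z₁ - z₂ ∈ Y) s) : (0 : ZMod q) ∈ kSum s Y := by
  obtain ⟨z, -, harc⟩ := h
  cases s with
  | zero => exact zero_mem_kSum_zero
  | succ s =>
    refine ⟨fun t => z t - z (t + 1), fun t => ?_, Fin.sum_sub_add_one z⟩
    simpa only [Fin.mk_add_one_mod] using harc t

theorem no_short_cycles_general (κ : ℕ) (q : ℕ)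
    (Y : Set (ZMod q)) (hY : (0 : ZMod q) ∉ kSum (Nat.factorial (κ - 1)) Y) :
    ∀ s : ℕ, 1 ≤ s → s ≤ κ - 1 →
      ¬ HasCycleOfLength (fun z₁ z₂ : ZMod q => z₁ - z₂ ∈ Y) s :=
  fun _ hs₁ hs₂ hcycle =>
    hY (zero_mem_kSum_of_dvd (zero_mem_kSum_of_hasCycleOfLength hcycle) (Nat.dvd_factorial hs₁ hs₂))

/-- If 0 ∉ ((κ-1)!)Y then the digraph on ℤ/q with arcs z₁ → z₂ iff z₁ - z₂ ∈ Y
has no directed cycle of length shorter than κ. -/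
theorem no_short_cycles (κ : ℕ) (hκ : 0 < κ) (q : ℕ) (hq : 0 < q)
    (Y : Set (ZMod q)) (hY : (0 : ZMod q) ∉ kSum (Nat.factorial (κ - 1)) Y) :
    ∀ s : ℕ, 1 ≤ s → s ≤ κ - 1 →
      ¬ HasCycleOfLength (fun z₁ z₂ : ZMod q => z₁ - z₂ ∈ Y) s :=
  no_short_cycles_general κ q Y hY
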